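/- Let 0 < κ < 1, let v : Ω → EuclideanSpace ℝ (Fin d) be a finite family of unit vectors with |⟪v i, v j⟫| = κ for all i ≠ j whose two-graph (Ω, C) is a regular two-graph with parameters (n, a, b), and let Γ ⊆ Ω be an incoherent subset with |Γ| = d. Suppose k is a natural number such that for every γ ∈ Ω∖Γ and every α ∈ Γ, |Γ ∩ S_{γα}| = k or |Γ ∩ S_{γα}| = d − k. Then for all distinct α, β ∈ Γ, the sum of |S_{αβ} ∩ S_{ην}| over all 2-element subsets {η, ν} of Γ∖{α, β} equals a·(d − k − 1)·(k − 1). -/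

import Mathlib

open scoped RealInnerProductSpace
open Finset

/-- The set `S_{xy} = {z : {x,y,z} ∈ C}` associated to a two-graph `(Ω, C)`. -/
def Sset {Ω : Type*} [Fintype Ω] [DecidableEq Ω] (C : Finset (Finset Ω)) (x y : Ω) :
    Finset Ω :=
  univ.filter fun z => ({x, y, z} : Finset Ω) ∈ C

/-!
The four triple products of inner products inside a 4-set multiply to a square, so every 4-set
contains an even number of coherent triples. Hence, for `γ ∉ Γ` and distinct `η, ν ∈ Γ ∖ {α}`,
the triple `{γ, η, ν}` is coherent iff exactly one of `η, ν` lies in `S_{γα}`, because `{η, ν, α}`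
is not. For `γ ∈ S_{αβ}` we have `β ∈ S_{γα}` and `α ∉ S_{γα}`, so the coherent pairs through `γ`
in `Γ ∖ {α, β}` number `(m - 1)(d - m - 1)` with `m = |Γ ∩ S_{γα}| ∈ {k, d - k}`. Summing over the
`a` points of `S_{αβ}` gives the claim.
-/

lemma int_sub_one_mul_sub_sub_one {d k m : ℕ} (hm : 0 < m) (h : m = k ∨ m = d - k) :
    ((m : ℤ) - 1) * ((d : ℤ) - m - 1) = ((d : ℤ) - k - 1) * ((k : ℤ) - 1) := by
  rcases h with rfl | rfl
  · ring
  · rw [Nat.cast_sub (by omega)]; ring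

lemma card_filter_powersetCard_two_of_iff_xor {Ω : Type*} [DecidableEq Ω] (s T : Finset Ω)
    (P : Finset Ω → Prop) [DecidablePred P]
    (hP : ∀ x ∈ s, ∀ y ∈ s, x ≠ y → (P {x, y} ↔ Xor (x ∈ T) (y ∈ T))) :
    #((s.powersetCard 2).filter P) = #(s ∩ T) * #(s \ T) := by
  rw [← card_product]
  symm
  refine card_bij (fun q _ => {q.1, q.2}) ?_ ?_ ?_
  · rintro ⟨x, y⟩ hq
    simp only [mem_product, mem_inter, mem_sdiff] at hq
    obtain ⟨⟨hx, hxT⟩, hy, hyT⟩ := hq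
    have hxy : x ≠ y := by rintro rfl; exact hyT hxT
    refine mem_filter.mpr ⟨mem_powersetCard.mpr ⟨?_, card_pair hxy⟩, ?_⟩
    · simp [insert_subset_iff, hx, hy]
    · exact (hP x hx y hy hxy).mpr (by simp [Xor, hxT, hyT])
  · rintro ⟨x, y⟩ hq ⟨x', y'⟩ hq' heq
    simp only [mem_product, mem_inter, mem_sdiff] at hq hq'
    have hx' : x' ∈ ({x, y} : Finset Ω) := heq ▸ mem_insert_self _ _
    have hy' : y' ∈ ({x, y} : Finset Ω) := heq ▸ by simp
    simp only [mem_insert, mem_singleton] at hx' hy'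
    rcases hx' with rfl | rfl <;> rcases hy' with rfl | rfl <;> simp_all
  · intro p hp
    simp only [mem_filter, mem_powersetCard] at hp
    obtain ⟨⟨hps, hcard⟩, hPp⟩ := hp
    obtain ⟨x, y, hxy, rfl⟩ := card_eq_two.mp hcard
    have hx : x ∈ s := hps (by simp)
    have hy : y ∈ s := hps (by simp)
    rcases (hP x hx y hy hxy).mp hPp with ⟨hxT, hyT⟩ | ⟨hyT, hxT⟩
    · exact ⟨(x, y), by simp [hx, hy, hxT, hyT], rfl⟩
    · exact ⟨(y, x), by simp [hx, hy, hxT, hyT], pair_comm y x⟩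

lemma neg_iff_xor_of_mul_mul_pos {x y z : ℝ} (h : 0 < x * y * z) :
    x < 0 ↔ Xor (y < 0) (z < 0) := by
  rw [mul_assoc, mul_pos_iff, mul_pos_iff, mul_neg_iff] at h
  grind

section TwoGraph

variable {Ω : Type*} [DecidableEq Ω] {C : Finset (Finset Ω)}

lemma ne_and_ne_of_insert_insert_mem (hC3 : ∀ c ∈ C, #c = 3) {x y z : Ω}
    (h : ({x, y, z} : Finset Ω) ∈ C) : z ≠ x ∧ z ≠ y := by
  have h3 := hC3 _ h
  constructor <;> rintro rfl <;> simp at h3 <;>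
    exact (card_le_two.trans_lt (by norm_num)).ne h3

variable [Fintype Ω]

lemma mem_Sset {x y z : Ω} : z ∈ Sset C x y ↔ ({x, y, z} : Finset Ω) ∈ C := by
  simp [Sset]

lemma mem_Sset_rotate {x y z : Ω} : z ∈ Sset C x y ↔ y ∈ Sset C z x := by
  rw [mem_Sset, mem_Sset, insert_comm z, pair_comm z]

lemma notMem_of_mem_Sset (hC3 : ∀ c ∈ C, #c = 3) {Γ : Finset Ω}
    (hinc : ∀ t ⊆ Γ, #t = 3 → t ∉ C) {x y z : Ω} (hx : x ∈ Γ) (hy : y ∈ Γ)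
    (hz : z ∈ Sset C x y) : z ∉ Γ := fun hzΓ =>
  hinc _ (by simp [insert_subset_iff, hx, hy, hzΓ]) (hC3 _ (mem_Sset.mp hz)) (mem_Sset.mp hz)

lemma card_Sset (hC3 : ∀ c ∈ C, #c = 3) {x y : Ω} (hxy : x ≠ y) :
    #(Sset C x y) = #(C.filter fun c => {x, y} ⊆ c) := by
  refine card_bij (fun z _ => {x, y, z}) (fun z hz => ?_) (fun z hz z' hz' he => ?_) fun c hc => ?_
  · rw [mem_Sset] at hz
    exact mem_filter.mpr ⟨hz, by simp [insert_subset_iff]⟩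
  · have hz'z : z' ∈ ({x, y, z} : Finset Ω) := he ▸ by simp
    obtain ⟨hz'x, hz'y⟩ := ne_and_ne_of_insert_insert_mem hC3 (mem_Sset.mp hz')
    simp only [mem_insert, mem_singleton] at hz'z
    exact ((hz'z.resolve_left hz'x).resolve_left hz'y).symm
  · obtain ⟨hcC, hxyc⟩ := mem_filter.mp hc
    obtain ⟨z, hz⟩ : ∃ z, c \ {x, y} = {z} := by
      rw [← card_eq_one, card_sdiff_of_subset hxyc, card_pair hxy, hC3 c hcC]
    have hc : ({x, y, z} : Finset Ω) = c := by
      rw [← union_sdiff_of_subset hxyc, hz]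
      ext
      simp
    exact ⟨z, mem_Sset.mpr (hc ▸ hcC), hc⟩

end TwoGraph

section Equiangular

variable {Ω E : Type*} [DecidableEq Ω] [NormedAddCommGroup E] [InnerProductSpace ℝ E]
  {v : Ω → E} {C : Finset (Finset Ω)}

lemma mem_iff_xor_of_notMem (hv : ∀ i j, i ≠ j → ⟪v i, v j⟫ ≠ 0)
    (hCdef : ∀ i j l : Ω, i ≠ j → i ≠ l → j ≠ l →
      (({i, j, l} : Finset Ω) ∈ C ↔ ⟪v i, v j⟫ * ⟪v i, v l⟫ * ⟪v j, v l⟫ < 0))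
    {γ η ν μ : Ω} (hγη : γ ≠ η) (hγν : γ ≠ ν) (hγμ : γ ≠ μ) (hην : η ≠ ν) (hημ : η ≠ μ)
    (hνμ : ν ≠ μ) (hηνμ : ({η, ν, μ} : Finset Ω) ∉ C) :
    ({γ, η, ν} : Finset Ω) ∈ C ↔
      Xor (({γ, η, μ} : Finset Ω) ∈ C) (({γ, ν, μ} : Finset Ω) ∈ C) := by
  rw [hCdef _ _ _ hην hημ hνμ, not_lt] at hηνμ
  have hpos : 0 < ⟪v η, v ν⟫ * ⟪v η, v μ⟫ * ⟪v ν, v μ⟫ :=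
    hηνμ.lt_of_ne' (mul_ne_zero (mul_ne_zero (hv _ _ hην) (hv _ _ hημ)) (hv _ _ hνμ))
  have hsq : 0 < (⟪v γ, v η⟫ * ⟪v γ, v ν⟫ * ⟪v γ, v μ⟫) ^ 2 := by
    have := mul_ne_zero (mul_ne_zero (hv _ _ hγη) (hv _ _ hγν)) (hv _ _ hγμ)
    positivity
  rw [hCdef _ _ _ hγη hγν hην, hCdef _ _ _ hγη hγμ hημ, hCdef _ _ _ hγν hγμ hνμ]
  exact neg_iff_xor_of_mul_mul_pos ((mul_pos hsq hpos).trans_eq (by ring))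

variable [Fintype Ω]

lemma card_coherent_pairs_of_mem_Sset (hv : ∀ i j, i ≠ j → ⟪v i, v j⟫ ≠ 0)
    (hCdef : ∀ i j l : Ω, i ≠ j → i ≠ l → j ≠ l →
      (({i, j, l} : Finset Ω) ∈ C ↔ ⟪v i, v j⟫ * ⟪v i, v l⟫ * ⟪v j, v l⟫ < 0))
    (hC3 : ∀ c ∈ C, #c = 3) {Γ : Finset Ω} (hinc : ∀ t ⊆ Γ, #t = 3 → t ∉ C)
    {α β γ : Ω} (hα : α ∈ Γ) (hβ : β ∈ Γ) (hγ : γ ∈ Sset C α β) :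
    (#(((Γ \ {α, β}).powersetCard 2).filter fun p => insert γ p ∈ C) : ℤ)
      = (#(Γ ∩ Sset C γ α) - 1) * (#Γ - #(Γ ∩ Sset C γ α) - 1) := by
  have hγΓ := notMem_of_mem_Sset hC3 hinc hα hβ hγ
  have hγα := (ne_and_ne_of_insert_insert_mem hC3 (mem_Sset.mp hγ)).1
  set T := Sset C γ α
  have hαT : α ∉ T := fun h => (ne_and_ne_of_insert_insert_mem hC3 (mem_Sset.mp h)).2 rfl
  have hβT : β ∈ T := mem_Sset_rotate.mp hγ
  rw [card_filter_powersetCard_two_of_iff_xor _ T _ fun x hx y hy hxy => ?_]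
  · have hinter : (Γ \ {α, β}) ∩ T = (Γ ∩ T).erase β := by
      ext; simp only [mem_inter, mem_sdiff, mem_erase, mem_insert, mem_singleton]; grind
    have hsdiff : (Γ \ {α, β}) \ T = (Γ \ T).erase α := by
      ext; simp only [mem_sdiff, mem_erase, mem_insert, mem_singleton]; grind
    have hβ' : β ∈ Γ ∩ T := mem_inter.mpr ⟨hβ, hβT⟩
    have hα' : α ∈ Γ \ T := mem_sdiff.mpr ⟨hα, hαT⟩
    have hsplit := card_sdiff_add_card_inter Γ T
    rw [hinter, hsdiff, card_erase_of_mem hβ', card_erase_of_mem hα']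
    push_cast [Nat.cast_sub (card_pos.mpr ⟨β, hβ'⟩), Nat.cast_sub (card_pos.mpr ⟨α, hα'⟩), ← hsplit]
    ring
  · simp only [mem_sdiff, mem_insert, mem_singleton, not_or] at hx hy
    rw [mem_Sset, mem_Sset, pair_comm α x, pair_comm α y]
    exact mem_iff_xor_of_notMem hv hCdef (ne_of_mem_of_not_mem hx.1 hγΓ).symm
      (ne_of_mem_of_not_mem hy.1 hγΓ).symm hγα hxy hx.2.1 hy.2.1
      (hinc _ (by simp [insert_subset_iff, hx.1, hy.1, hα])
        (card_eq_three.mpr ⟨x, y, α, hxy, hx.2.1, hy.2.1, rfl⟩))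

end Equiangular

theorem stmt_15_general {Ω : Type*} [Fintype Ω] [DecidableEq Ω] (d : ℕ)
    (κ : ℝ) (hκ0 : 0 < κ)
    (v : Ω → EuclideanSpace ℝ (Fin d))
    (hangle : ∀ i j : Ω, i ≠ j → |⟪v i, v j⟫| = κ)
    (C : Finset (Finset Ω))
    (hC3 : ∀ c ∈ C, c.card = 3)
    (hCdef : ∀ i j l : Ω, i ≠ j → i ≠ l → j ≠ l →
      (({i, j, l} : Finset Ω) ∈ C ↔ ⟪v i, v j⟫ * ⟪v i, v l⟫ * ⟪v j, v l⟫ < 0))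
    (a : ℕ)
    (ha : ∀ p : Finset Ω, p.card = 2 → (C.filter fun c => p ⊆ c).card = a)
    (Γ : Finset Ω) (hΓcard : Γ.card = d)
    (hinc : ∀ t ⊆ Γ, t.card = 3 → t ∉ C)
    (k : ℕ)
    (hpart : ∀ γ : Ω, γ ∉ Γ → ∀ α ∈ Γ,
      (Γ ∩ Sset C γ α).card = k ∨ (Γ ∩ Sset C γ α).card = d - k) :
    ∀ α ∈ Γ, ∀ β ∈ Γ, α ≠ β →
      (∑ p ∈ (Γ \ {α, β}).powersetCard 2,
          ((Sset C α β ∩ univ.filter fun γ => insert γ p ∈ C).card : ℤ))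
        = a * ((d : ℤ) - k - 1) * ((k : ℤ) - 1) := by
  intro α hα β hβ hαβ
  have hv : ∀ i j, i ≠ j → ⟪v i, v j⟫ ≠ 0 := fun i j hij h0 => by
    simpa [h0, hκ0.ne] using hangle i j hij
  have hpairs : ∀ γ ∈ Sset C α β,
      (#(((Γ \ {α, β}).powersetCard 2).filter fun p => insert γ p ∈ C) : ℤ)
        = ((d : ℤ) - k - 1) * ((k : ℤ) - 1) := fun γ hγ => by
    rw [card_coherent_pairs_of_mem_Sset hv hCdef hC3 hinc hα hβ hγ, hΓcard]
    exact int_sub_one_mul_sub_sub_one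
      (card_pos.mpr ⟨β, mem_inter.mpr ⟨hβ, mem_Sset_rotate.mp hγ⟩⟩)
      (hpart γ (notMem_of_mem_Sset hC3 hinc hα hβ hγ) α hα)
  have hdouble := sum_card_bipartiteAbove_eq_sum_card_bipartiteBelow
    (s := (Γ \ {α, β}).powersetCard 2) (t := Sset C α β) (r := fun p γ => insert γ p ∈ C)
  simp only [bipartiteAbove, bipartiteBelow] at hdouble
  simp_rw [inter_filter, inter_univ]
  rw [← Nat.cast_sum, hdouble, Nat.cast_sum, sum_congr rfl hpairs, sum_const, card_Sset hC3 hαβ,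
    ha _ (card_pair hαβ), nsmul_eq_mul]
  ring

/-- **Lemma 8.3 (Gillespie).** For a set of equiangular lines with regular two-graph with
parameters `(n, a, b)` and an incoherent subset `Γ` of size `d`, for distinct `α, β ∈ Γ`
the sum of `|S_{αβ} ∩ S_{ην}|` over all 2-subsets `{η, ν}` of `Γ∖{α, β}` equals
`a(d-k-1)(k-1)`. -/
theorem stmt_15 {Ω : Type*} [Fintype Ω] [DecidableEq Ω] (d : ℕ)
    (κ : ℝ) (hκ0 : 0 < κ) (hκ1 : κ < 1)
    (v : Ω → EuclideanSpace ℝ (Fin d))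
    (hunit : ∀ i, ‖v i‖ = 1)
    (hangle : ∀ i j : Ω, i ≠ j → |⟪v i, v j⟫| = κ)
    (C : Finset (Finset Ω))
    (hC3 : ∀ c ∈ C, c.card = 3)
    (hCdef : ∀ i j l : Ω, i ≠ j → i ≠ l → j ≠ l →
      (({i, j, l} : Finset Ω) ∈ C ↔ ⟪v i, v j⟫ * ⟪v i, v l⟫ * ⟪v j, v l⟫ < 0))
    (n a b : ℕ)
    (hn : Fintype.card Ω = n)
    (ha : ∀ p : Finset Ω, p.card = 2 → (C.filter fun c => p ⊆ c).card = a)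
    (hb : ∀ c ∈ C, (((univ : Finset Ω).powersetCard 4).filter
      (fun Q => c ⊆ Q ∧ ∀ t ∈ Q.powersetCard 3, t ∈ C)).card = b)
    (Γ : Finset Ω) (hΓcard : Γ.card = d)
    (hinc : ∀ t ⊆ Γ, t.card = 3 → t ∉ C)
    (k : ℕ)
    (hpart : ∀ γ : Ω, γ ∉ Γ → ∀ α ∈ Γ,
      (Γ ∩ Sset C γ α).card = k ∨ (Γ ∩ Sset C γ α).card = d - k) :
    ∀ α ∈ Γ, ∀ β ∈ Γ, α ≠ β →
      (∑ p ∈ (Γ \ {α, β}).powersetCard 2,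
          ((Sset C α β ∩ univ.filter fun γ => insert γ p ∈ C).card : ℤ))
        = a * ((d : ℤ) - k - 1) * ((k : ℤ) - 1) :=
  stmt_15_general d κ hκ0 v hangle C hC3 hCdef a ha Γ hΓcard hinc k hpart
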